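/- Suppose the adaptive directional subdivision scheme with masks a₀, a₁ converges in C(ℝ²) and that for each ε ∈ E_∞ the limit function f_ε is compactly supported. Then for every ε ∈ E_∞, lim_{n→∞} sup { ‖∇(S_{P_nε} c)‖_∞ : c : ℤ² → ℝ bounded with ‖∇c‖_∞ ≤ 1 } = 0; that is, the iterated subdivision operators are asymptotically contractive on differences. -/

import Mathlib

/-- Bi-infinite two-dimensional integer index set `ℤ²`. -/
abbrev Z2 : Type := Fin 2 → ℤ

/-- The scaling matrix `W₀` with rows `(4,0)` and `(0,2)`. -/
def W0 : Matrix (Fin 2) (Fin 2) ℤ := !![4, 0; 0, 2]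

/-- The scaling matrix `W₁` with rows `(4,-4)` and `(0,2)`. -/
def W1 : Matrix (Fin 2) (Fin 2) ℤ := !![4, -4; 0, 2]

/-- `W_η` for `η ∈ {0,1}`. -/
def Wsel : Fin 2 → Matrix (Fin 2) (Fin 2) ℤ := ![W0, W1]

/-- A sequence `c : ℤ² → ℝ` is bounded. -/
def Bdd (c : Z2 → ℝ) : Prop := ∃ K : ℝ, ∀ α, |c α| ≤ K

/-- The subdivision operator `S_{a,W} c = Σ_α a(· − Wα) c(α)`. -/
noncomputable def subd (a : Z2 → ℝ) (W : Matrix (Fin 2) (Fin 2) ℤ) (c : Z2 → ℝ) : Z2 → ℝ :=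
  fun β => ∑' α : Z2, a (β - W.mulVec α) * c α

/-- The Dirac sequence `δ` on `ℤ²`. -/
noncomputable def delta : Z2 → ℝ := fun α => if α = 0 then 1 else 0

/-- The iterated scheme `S_ε = S_{ε_n} ⋯ S_{ε_1}` applied to `c`, for
`ε = [ε₁, …, ε_n]` (the head `ε₁` is applied first). -/
noncomputable def Ssub (a : Fin 2 → Z2 → ℝ) : List (Fin 2) → (Z2 → ℝ) → (Z2 → ℝ)
  | [], c => c
  | η :: rest, c => Ssub a rest (subd (a η) (Wsel η) c)

/-- `W_ε = W_{ε_n} ⋯ W_{ε_1}` for `ε = [ε₁, …, ε_n]`. -/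
def WprodL : List (Fin 2) → Matrix (Fin 2) (Fin 2) ℤ
  | [] => 1
  | η :: rest => WprodL rest * Wsel η

/-- `W_ε` viewed as a real matrix. -/
noncomputable def WR (ε : List (Fin 2)) : Matrix (Fin 2) (Fin 2) ℝ :=
  (WprodL ε).map (Int.cast : ℤ → ℝ)

/-- The initial segment `P_n ε = (ε₁, …, ε_n)` of `ε ∈ E_∞ = {0,1}^ℕ`. -/
def Pn (ε : ℕ → Fin 2) (n : ℕ) : List (Fin 2) := List.ofFn (fun i : Fin n => ε i)

/-- Cast of an integer vector to `ℝ²`. -/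
noncomputable def castV (α : Z2) : Fin 2 → ℝ := fun i => (α i : ℝ)

/-- The adaptive directional subdivision scheme with masks `a₀, a₁` converges in
`C(ℝ²)`: for every `ε ∈ E_∞` there is a nonzero, uniformly continuous `f_ε`
with `lim_{n→∞} sup_{α∈ℤ²} |f_ε(W_{P_nε}⁻¹ α) − S_{P_nε} δ (α)| = 0`. -/
def SchemeConverges (a : Fin 2 → Z2 → ℝ) : Prop :=
  ∀ ε : ℕ → Fin 2, ∃ f : (Fin 2 → ℝ) → ℝ, f ≠ 0 ∧ UniformContinuous f ∧
    ∀ η : ℝ, 0 < η → ∃ N : ℕ, ∀ n ≥ N, ∀ α : Z2,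
      |f ((WR (Pn ε n))⁻¹.mulVec (castV α)) - Ssub a (Pn ε n) delta α| < η

/-- The backward difference operator: `∇c = (c(· − e₁) − c, c(· − e₂) − c)`. -/
def nabla (c : Z2 → ℝ) : Z2 → (Fin 2 → ℝ) :=
  fun α => ![c (α - ![1, 0]) - c α, c (α - ![0, 1]) - c α]

/-!
Write `g_n = S_{P_n ε} δ` and `W_n = W_{P_n ε}`. Both `W_η⁻¹` contract the sup norm by `3/4`, so
`W_n⁻¹ (supp g_n)` stays in a fixed ball, and `S_{P_n ε} c (β) = ∑_α g_n (β - W_n α) c α` only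
involves the boundedly many `α` near `W_n⁻¹ β`. Uniform convergence to a uniformly continuous
limit forces `∇ g_n → 0` uniformly; along a constant `ε` it also forces the sum rules
`∑_α a_η (β - W_η α) = 1`, i.e. `S_ε` fixes constants. Hence
`∇ (S_{P_n ε} c) (β) = ∑_α ∇ g_n (β - W_n α) (c α - c α₀)`, a bounded number of terms, each
`o(1) · O(1)` since `∇ c` is bounded.
-/

open Filter Topology Matrix

noncomputable def WselR (η : Fin 2) : Matrix (Fin 2) (Fin 2) ℝ := (Wsel η).map (Int.cast : ℤ → ℝ)

section Lattice

lemma castV_add (α β : Z2) : castV (α + β) = castV α + castV β := by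
  funext i; simp [castV]

lemma castV_sub (α β : Z2) : castV (α - β) = castV α - castV β := by
  funext i; simp [castV]

lemma castV_mulVec (W : Matrix (Fin 2) (Fin 2) ℤ) (α : Z2) :
    castV (W *ᵥ α) = W.map (Int.cast : ℤ → ℝ) *ᵥ castV α :=
  funext fun i => RingHom.map_mulVec (Int.castRingHom ℝ) W α i

lemma norm_castV_single (i : Fin 2) : ‖castV (Pi.single i 1)‖ = 1 := by
  fin_cases i <;> simp [castV, Pi.norm_def, Fin.univ_succ, Pi.single_apply]

end Lattice

section Scaling

lemma norm_le_mul_norm_WselR_mulVec (η : Fin 2) (y : Fin 2 → ℝ) :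
    ‖y‖ ≤ 3 / 4 * ‖WselR η *ᵥ y‖ := by
  set z := WselR η *ᵥ y with hz
  have hz0 : |z 0| ≤ ‖z‖ := norm_le_pi_norm z 0
  have hz1 : |z 1| ≤ ‖z‖ := norm_le_pi_norm z 1
  refine (pi_norm_le_iff_of_nonneg (by positivity)).2 fun i => ?_
  rw [Real.norm_eq_abs, abs_le]
  rw [abs_le] at hz0 hz1
  fin_cases η <;> fin_cases i <;>
    simp [hz, WselR, Wsel, W0, W1] at hz0 hz1 ⊢ <;>
    constructor <;> linarith

lemma det_WselR (η : Fin 2) : (WselR η).det = 8 := by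
  fin_cases η <;> norm_num [WselR, Wsel, W0, W1, det_fin_two]

lemma WprodL_append (l : List (Fin 2)) (η : Fin 2) : WprodL (l ++ [η]) = Wsel η * WprodL l := by
  induction l with
  | nil => simp [WprodL]
  | cons η' l ih => simp [WprodL, ih, Matrix.mul_assoc]

lemma WR_append (l : List (Fin 2)) (η : Fin 2) : WR (l ++ [η]) = WselR η * WR l := by
  rw [WR, WprodL_append]
  exact Matrix.map_mul (f := Int.castRingHom ℝ)

lemma det_WR (l : List (Fin 2)) : (WR l).det = 8 ^ l.length := by
  induction l using List.reverseRecOn with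
  | nil => simp [WR, WprodL]
  | append_singleton l η ih => simp [WR_append, det_mul, det_WselR, ih, pow_succ, mul_comm]

lemma isUnit_det_WR (l : List (Fin 2)) : IsUnit (WR l).det := by
  simp [det_WR]

lemma norm_le_mul_norm_WR_mulVec (l : List (Fin 2)) (y : Fin 2 → ℝ) :
    ‖y‖ ≤ (3 / 4) ^ l.length * ‖WR l *ᵥ y‖ := by
  induction l using List.reverseRecOn with
  | nil => simp [WR, WprodL]
  | append_singleton l η ih =>
    calc ‖y‖ ≤ (3 / 4) ^ l.length * ‖WR l *ᵥ y‖ := ih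
      _ ≤ (3 / 4) ^ l.length * (3 / 4 * ‖WselR η *ᵥ (WR l *ᵥ y)‖) := by
        gcongr; exact norm_le_mul_norm_WselR_mulVec η _
      _ = (3 / 4) ^ (l ++ [η]).length * ‖WR (l ++ [η]) *ᵥ y‖ := by
        rw [WR_append, ← mulVec_mulVec, List.length_append, List.length_singleton, pow_succ]
        ring

lemma norm_inv_WR_mulVec_le (l : List (Fin 2)) (x : Fin 2 → ℝ) :
    ‖(WR l)⁻¹ *ᵥ x‖ ≤ (3 / 4) ^ l.length * ‖x‖ := by
  have h := norm_le_mul_norm_WR_mulVec l ((WR l)⁻¹ *ᵥ x)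
  rwa [mulVec_mulVec, mul_nonsing_inv _ (isUnit_det_WR l), one_mulVec] at h

lemma inv_WR_mulVec_WR_mulVec (l : List (Fin 2)) (x : Fin 2 → ℝ) :
    (WR l)⁻¹ *ᵥ (WR l *ᵥ x) = x := by
  rw [mulVec_mulVec, nonsing_inv_mul _ (isUnit_det_WR l), one_mulVec]

lemma inv_WR_mulVec_castV_mulVec (l : List (Fin 2)) (α : Z2) :
    (WR l)⁻¹ *ᵥ castV (WprodL l *ᵥ α) = castV α := by
  rw [castV_mulVec]; exact inv_WR_mulVec_WR_mulVec l _

lemma WprodL_mulVec_injective (l : List (Fin 2)) : Function.Injective (WprodL l *ᵥ ·) := by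
  intro α β h
  have := congrArg (fun γ => (WR l)⁻¹ *ᵥ castV γ) h
  simp only [inv_WR_mulVec_castV_mulVec] at this
  exact funext fun i => by simpa [castV] using congrFun this i

lemma Wsel_mulVec_injective (η : Fin 2) : Function.Injective (Wsel η *ᵥ ·) := by
  simpa [WprodL] using WprodL_mulVec_injective [η]

lemma inv_WR_append_mulVec_castV_mulVec (l : List (Fin 2)) (η : Fin 2) (α : Z2) :
    (WR (l ++ [η]))⁻¹ *ᵥ castV (Wsel η *ᵥ α) = (WR l)⁻¹ *ᵥ castV α := by
  rw [WR_append, Matrix.mul_inv_rev, ← mulVec_mulVec, castV_mulVec, ← WselR,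
    mulVec_mulVec (castV α) (WselR η)⁻¹, nonsing_inv_mul _ (by simp [det_WselR]), one_mulVec]

end Scaling

section Subdivision

lemma finite_setOf_comp_sub_mulVec_ne_zero {g : Z2 → ℝ} (hg : (Function.support g).Finite)
    {W : Matrix (Fin 2) (Fin 2) ℤ} (hW : Function.Injective (W *ᵥ ·)) (β : Z2) :
    {α : Z2 | g (β - W *ᵥ α) ≠ 0}.Finite :=
  hg.preimage ((sub_right_injective.comp hW).injOn)

variable (a : Z2 → ℝ) (W : Matrix (Fin 2) (Fin 2) ℤ)

lemma subd_eq_sum (c : Z2 → ℝ) (β : Z2) (t : Finset Z2)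
    (ht : ∀ α, a (β - W *ᵥ α) ≠ 0 → α ∈ t) :
    subd a W c β = ∑ α ∈ t, a (β - W *ᵥ α) * c α :=
  tsum_eq_sum fun α hα => by rw [not_imp_comm.1 (ht α) hα, zero_mul]

lemma exists_of_subd_ne_zero {c : Z2 → ℝ} {β : Z2} (h : subd a W c β ≠ 0) :
    ∃ α, a (β - W *ᵥ α) ≠ 0 ∧ c α ≠ 0 := by
  by_contra! hzero
  refine h ((tsum_congr fun α => ?_).trans tsum_zero)
  by_cases hα : a (β - W *ᵥ α) = 0
  · rw [hα, zero_mul]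
  · rw [hzero α hα, mul_zero]

lemma subd_comp_add (c : Z2 → ℝ) (v β : Z2) :
    subd a W (fun γ => c (γ + v)) β = subd a W c (β + W *ᵥ v) := by
  rw [subd, subd, ← (Equiv.addRight v).tsum_eq fun μ => a (β + W *ᵥ v - W *ᵥ μ) * c μ]
  refine tsum_congr fun α => ?_
  simp only [Equiv.coe_addRight, mulVec_add]
  congr 2
  abel

lemma support_subd_finite (ha : (Function.support a).Finite) {c : Z2 → ℝ}
    (hc : (Function.support c).Finite) : (Function.support (subd a W c)).Finite := by
  refine ((hc.prod ha).image fun p => W *ᵥ p.1 + p.2).subset fun β hβ => ?_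
  obtain ⟨α, hα, hcα⟩ := exists_of_subd_ne_zero a W hβ
  exact ⟨(α, β - W *ᵥ α), ⟨hcα, hα⟩, add_sub_cancel _ _⟩

end Subdivision

section Iteration

variable (a : Fin 2 → Z2 → ℝ)

lemma Ssub_append (l : List (Fin 2)) (η : Fin 2) (c : Z2 → ℝ) :
    Ssub a (l ++ [η]) c = subd (a η) (Wsel η) (Ssub a l c) := by
  induction l generalizing c with
  | nil => rfl
  | cons η' l ih => exact ih _

lemma Pn_succ (ε : ℕ → Fin 2) (n : ℕ) : Pn ε (n + 1) = Pn ε n ++ [ε n] := by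
  rw [Pn, List.ofFn_succ', List.concat_eq_append]; rfl

lemma Pn_length (ε : ℕ → Fin 2) (n : ℕ) : (Pn ε n).length = n := by
  simp [Pn]

lemma support_Ssub_delta_finite (ha : ∀ η, (Function.support (a η)).Finite) (l : List (Fin 2)) :
    (Function.support (Ssub a l delta)).Finite := by
  induction l using List.reverseRecOn with
  | nil => exact (Set.finite_singleton 0).subset fun γ hγ => by_contra fun h => hγ (if_neg h)
  | append_singleton l η ih => rw [Ssub_append]; exact support_subd_finite _ _ (ha η) ih

lemma Ssub_eq_finsum (ha : ∀ η, (Function.support (a η)).Finite) (l : List (Fin 2))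
    (c : Z2 → ℝ) (β : Z2) :
    Ssub a l c β = ∑ᶠ α, Ssub a l delta (β - WprodL l *ᵥ α) * c α := by
  induction l using List.reverseRecOn generalizing c β with
  | nil =>
    rw [finsum_eq_single _ β fun α hα => ?_]
    · simp [Ssub, WprodL, delta]
    · simp [Ssub, WprodL, delta, sub_eq_zero, Ne.symm hα]
  | append_singleton l η ih =>
    have hcover := finite_setOf_comp_sub_mulVec_ne_zero (ha η) (Wsel_mulVec_injective η) β
    have hg γ := finite_setOf_comp_sub_mulVec_ne_zero (support_Ssub_delta_finite a ha l)
      (WprodL_mulVec_injective l) γ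
    have hsubd (c' : Z2 → ℝ) : subd (a η) (Wsel η) c' β
        = ∑ γ ∈ hcover.toFinset, a η (β - Wsel η *ᵥ γ) * c' γ :=
      subd_eq_sum _ _ _ _ _ fun γ hγ => hcover.mem_toFinset.2 hγ
    rw [Ssub_append, hsubd, Finset.sum_congr rfl fun γ _ => by rw [ih, mul_finsum],
      sum_finsum_comm _ _ fun γ _ => (hg γ).subset fun α hα h => hα (by rw [h]; ring)]
    refine finsum_congr fun α => ?_
    have hshift : subd (a η) (Wsel η) (fun γ => Ssub a l delta (γ - WprodL l *ᵥ α)) β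
        = Ssub a (l ++ [η]) delta (β - WprodL (l ++ [η]) *ᵥ α) := by
      simp_rw [sub_eq_add_neg, ← mulVec_neg, subd_comp_add, Ssub_append, WprodL_append,
        mulVec_mulVec]
    rw [← hshift, hsubd, Finset.sum_mul]
    exact Finset.sum_congr rfl fun γ _ => by ring

lemma Ssub_eq_sum (ha : ∀ η, (Function.support (a η)).Finite) (l : List (Fin 2))
    (c : Z2 → ℝ) (β : Z2) (t : Finset Z2)
    (ht : ∀ α, Ssub a l delta (β - WprodL l *ᵥ α) ≠ 0 → α ∈ t) :
    Ssub a l c β = ∑ α ∈ t, Ssub a l delta (β - WprodL l *ᵥ α) * c α :=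
  (Ssub_eq_finsum a ha l c β).trans <| finsum_eq_sum_of_support_subset _ fun α hα =>
    ht α (left_ne_zero_of_mul hα)

lemma Ssub_one (h : ∀ η γ, subd (a η) (Wsel η) (fun _ => 1) γ = 1) (l : List (Fin 2)) :
    Ssub a l (fun _ => 1) = fun _ => 1 := by
  induction l with
  | nil => rfl
  | cons η l ih => rw [Ssub, funext (h η), ih]

lemma norm_inv_WR_mulVec_le_of_Ssub_delta_ne_zero {M : ℝ}
    (hM : ∀ η γ, a η γ ≠ 0 → ‖castV γ‖ ≤ M) (l : List (Fin 2)) {γ : Z2}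
    (hγ : Ssub a l delta γ ≠ 0) :
    ‖(WR l)⁻¹ *ᵥ castV γ‖ ≤ 3 * M * (1 - (3 / 4) ^ l.length) := by
  induction l using List.reverseRecOn generalizing γ with
  | nil =>
    obtain rfl : γ = 0 := by_contra fun h => hγ (if_neg h)
    simp [castV]
  | append_singleton l η ih =>
    rw [Ssub_append] at hγ
    obtain ⟨α, hu, hα⟩ := exists_of_subd_ne_zero _ _ hγ
    have hsplit : castV γ = castV (γ - Wsel η *ᵥ α) + castV (Wsel η *ᵥ α) := by
      rw [← castV_add, sub_add_cancel]
    have hu' := (norm_inv_WR_mulVec_le (l ++ [η]) _).trans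
      (mul_le_mul_of_nonneg_left (hM η _ hu) (by positivity))
    rw [hsplit, mulVec_add, inv_WR_append_mulVec_castV_mulVec]
    refine (norm_add_le _ _).trans ((add_le_add hu' (ih hα)).trans_eq ?_)
    simp only [List.length_append, List.length_singleton, pow_succ]
    ring

end Iteration

section Differences

lemma nabla_apply (c : Z2 → ℝ) (α : Z2) (i : Fin 2) :
    nabla c α i = c (α - Pi.single i 1) - c α := by
  fin_cases i <;> simp only [nabla, Fin.zero_eta, Fin.mk_one, Matrix.cons_val_zero,
    Matrix.cons_val_one] <;> congr 3 <;> ext j <;> fin_cases j <;> simp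

lemma abs_sub_le_of_abs_sub_succ_le {u : ℤ → ℝ} (h : ∀ k, |u (k + 1) - u k| ≤ 1) (m k : ℤ) :
    |u m - u k| ≤ |(m : ℝ) - k| := by
  wlog hkm : k ≤ m generalizing m k
  · simpa only [abs_sub_comm] using this k m (le_of_not_ge hkm)
  obtain ⟨n, rfl⟩ := Int.le.dest hkm
  clear hkm
  push_cast
  rw [add_sub_cancel_left, abs_of_nonneg (n.cast_nonneg : (0 : ℝ) ≤ n)]
  induction n with
  | zero => simp
  | succ n ih =>
    calc |u (k + (n + 1 : ℕ)) - u k| ≤ |u (k + n + 1) - u (k + n)| + |u (k + n) - u k| := by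
          push_cast; rw [← add_assoc]; exact abs_sub_le _ _ _
      _ ≤ 1 + n := add_le_add (h _) ih
      _ = (n + 1 : ℕ) := by push_cast; ring

lemma abs_sub_le_of_abs_nabla_le_one {c : Z2 → ℝ} (hc : ∀ α i, |nabla c α i| ≤ 1) (α β : Z2) :
    |c α - c β| ≤ |(α 0 : ℝ) - β 0| + |(α 1 : ℝ) - β 1| := by
  have h0 := abs_sub_le_of_abs_sub_succ_le (u := fun k => c ![k, β 1])
    (fun k => by simpa [nabla, abs_sub_comm] using hc ![k + 1, β 1] 0) (α 0) (β 0)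
  have h1 := abs_sub_le_of_abs_sub_succ_le (u := fun k => c ![α 0, k])
    (fun k => by simpa [nabla, abs_sub_comm] using hc ![α 0, k + 1] 1) (α 1) (β 1)
  have heta (γ : Z2) : ![γ 0, γ 1] = γ := by ext j; fin_cases j <;> rfl
  rw [heta] at h0 h1
  calc |c α - c β| ≤ |c α - c ![α 0, β 1]| + |c ![α 0, β 1] - c β| := abs_sub_le _ _ _
    _ ≤ _ := by linarith

end Differences

def IsLimitFunction (a : Fin 2 → Z2 → ℝ) (ε : ℕ → Fin 2) (f : (Fin 2 → ℝ) → ℝ) : Prop :=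
  ∀ η : ℝ, 0 < η → ∃ N : ℕ, ∀ n ≥ N, ∀ α : Z2,
    |f ((WR (Pn ε n))⁻¹.mulVec (castV α)) - Ssub a (Pn ε n) delta α| < η

section LimitFunction

variable {a : Fin 2 → Z2 → ℝ} {ε : ℕ → Fin 2} {f : (Fin 2 → ℝ) → ℝ}

lemma tendsto_inv_WR_mulVec_zero {l : ℕ → List (Fin 2)}
    (hl : Tendsto (fun n => (l n).length) atTop atTop) {r : ℕ → Fin 2 → ℝ} {C : ℝ}
    (hr : ∀ n, ‖r n‖ ≤ C) : Tendsto (fun n => (WR (l n))⁻¹ *ᵥ r n) atTop (𝓝 0) := by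
  have hbound : Tendsto (fun n => (3 / 4 : ℝ) ^ (l n).length * C) atTop (𝓝 0) := by
    simpa using ((tendsto_pow_atTop_nhds_zero_of_lt_one (by norm_num : (0 : ℝ) ≤ 3 / 4)
      (by norm_num)).comp hl).mul_const C
  exact squeeze_zero_norm (fun n => (norm_inv_WR_mulVec_le _ _).trans (by gcongr; exact hr n))
    hbound

lemma IsLimitFunction.tendsto (hlim : IsLimitFunction a ε f) (hfc : Continuous f)
    {k : ℕ → ℕ} (hk : Tendsto k atTop atTop) {β : ℕ → Z2} {x : Fin 2 → ℝ}
    (hβ : Tendsto (fun n => (WR (Pn ε (k n)))⁻¹ *ᵥ castV (β n)) atTop (𝓝 x)) :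
    Tendsto (fun n => Ssub a (Pn ε (k n)) delta (β n)) atTop (𝓝 (f x)) := by
  have herr : Tendsto (fun n => f ((WR (Pn ε (k n)))⁻¹ *ᵥ castV (β n))
      - Ssub a (Pn ε (k n)) delta (β n)) atTop (𝓝 0) := by
    refine Metric.tendsto_nhds.2 fun e he => ?_
    obtain ⟨N, hN⟩ := hlim e he
    filter_upwards [hk.eventually_ge_atTop N] with n hn
    simpa [Real.dist_eq] using hN _ hn (β n)
  simpa using ((hfc.tendsto x).comp hβ).sub herr

lemma subd_one_of_isLimitFunction {η : Fin 2} (ha : (Function.support (a η)).Finite)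
    (hf0 : f ≠ 0) (hfc : Continuous f) (hlim : IsLimitFunction a (fun _ => η) f) (γ : Z2) :
    subd (a η) (Wsel η) (fun _ => 1) γ = 1 := by
  obtain ⟨x, hx⟩ : ∃ x, f x ≠ 0 := by by_contra! h; exact hf0 (funext h)
  have hlen : Tendsto (fun n => (Pn (fun _ => η) n).length) atTop atTop := by
    simp only [Pn_length]; exact tendsto_id
  have hcover := finite_setOf_comp_sub_mulVec_ne_zero ha (Wsel_mulVec_injective η) γ
  have hsubd (c : Z2 → ℝ) (v : Z2) : subd (a η) (Wsel η) c (γ + Wsel η *ᵥ v)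
      = ∑ ν ∈ hcover.toFinset, a η (γ - Wsel η *ᵥ ν) * c (ν + v) := by
    rw [← subd_comp_add]
    exact subd_eq_sum _ _ _ _ _ fun ν hν => hcover.mem_toFinset.2 hν
  set A : ℕ → Z2 := fun n i => round ((WR (Pn (fun _ => η) n) *ᵥ x) i)
  have hA : Tendsto (fun n => (WR (Pn (fun _ => η) n))⁻¹ *ᵥ castV (A n)) atTop (𝓝 x) := by
    have hround : ∀ n, ‖castV (A n) - WR (Pn (fun _ => η) n) *ᵥ x‖ ≤ 1 / 2 := fun n =>
      (pi_norm_le_iff_of_nonneg (by norm_num)).2 fun i => by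
        simpa [castV, A, abs_sub_comm] using abs_sub_round ((WR (Pn (fun _ => η) n) *ᵥ x) i)
    have h := (tendsto_const_nhds (x := x)).add (tendsto_inv_WR_mulVec_zero hlen hround)
    rw [add_zero] at h
    exact h.congr fun n => by rw [mulVec_sub, inv_WR_mulVec_WR_mulVec, add_sub_cancel]
  have hnow (ν : Z2) : Tendsto (fun n => Ssub a (Pn (fun _ => η) n) delta (ν + A n)) atTop
      (𝓝 (f x)) := by
    have h := (tendsto_inv_WR_mulVec_zero hlen fun _ => le_refl ‖castV ν‖).add hA
    rw [zero_add] at h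
    exact hlim.tendsto hfc tendsto_id (h.congr fun n => by rw [castV_add, mulVec_add]; rfl)
  have hnext : Tendsto (fun n => Ssub a (Pn (fun _ => η) (n + 1)) delta
      (γ + Wsel η *ᵥ A n)) atTop (𝓝 (f x)) := by
    refine hlim.tendsto hfc (tendsto_add_atTop_nat 1) ?_
    simp only [Pn_succ, castV_add, mulVec_add, inv_WR_append_mulVec_castV_mulVec]
    simpa using (tendsto_inv_WR_mulVec_zero (l := fun n => Pn (fun _ => η) n ++ [η])
      (by simpa [Pn_length] using tendsto_add_atTop_nat 1) fun _ => le_refl ‖castV γ‖).add hA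
  have hsum : Tendsto (fun n => Ssub a (Pn (fun _ => η) (n + 1)) delta (γ + Wsel η *ᵥ A n))
      atTop (𝓝 (∑ ν ∈ hcover.toFinset, a η (γ - Wsel η *ᵥ ν) * f x)) := by
    simp only [Pn_succ, Ssub_append, hsubd]
    exact tendsto_finsetSum _ fun ν _ => (hnow ν).const_mul _
  have hfx : subd (a η) (Wsel η) (fun _ => 1) γ * f x = 1 * f x := by
    rw [subd_eq_sum _ _ _ _ _ fun ν hν => hcover.mem_toFinset.2 hν, Finset.sum_mul, one_mul]
    simpa only [mul_one] using (tendsto_nhds_unique hnext hsum).symm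
  exact mul_right_cancel₀ hx hfx

lemma IsLimitFunction.exists_abs_nabla_lt (hlim : IsLimitFunction a ε f)
    (huc : UniformContinuous f) {e : ℝ} (he : 0 < e) :
    ∃ N, ∀ n ≥ N, ∀ γ i, |nabla (Ssub a (Pn ε n) delta) γ i| < e := by
  obtain ⟨δ, hδ, hfδ⟩ := Metric.uniformContinuous_iff.1 huc (e / 3) (by positivity)
  obtain ⟨N₁, hN₁⟩ := hlim (e / 3) (by positivity)
  obtain ⟨N₂, hN₂⟩ := exists_pow_lt_of_lt_one hδ (by norm_num : (3 / 4 : ℝ) < 1)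
  refine ⟨max N₁ N₂, fun n hn γ i => ?_⟩
  have hclose : dist ((WR (Pn ε n))⁻¹ *ᵥ castV (γ - Pi.single i 1))
      ((WR (Pn ε n))⁻¹ *ᵥ castV γ) < δ := by
    rw [dist_eq_norm, castV_sub, mulVec_sub, sub_sub_cancel_left, norm_neg]
    calc _ ≤ (3 / 4) ^ n * ‖castV (Pi.single i 1)‖ := by
          simpa [Pn_length] using norm_inv_WR_mulVec_le (Pn ε n) (castV (Pi.single i 1))
      _ ≤ (3 / 4) ^ N₂ := by
          rw [norm_castV_single, mul_one]
          exact pow_le_pow_of_le_one (by norm_num) (by norm_num) (le_of_max_le_right hn)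
      _ < δ := hN₂
  have h1 := hN₁ n (le_of_max_le_left hn) (γ - Pi.single i 1)
  have h2 := hN₁ n (le_of_max_le_left hn) γ
  have h3 := hfδ hclose
  rw [Real.dist_eq] at h3
  rw [nabla_apply, abs_lt]
  rw [abs_lt] at h1 h2 h3
  constructor <;> linarith [h1.1, h1.2, h2.1, h2.2, h3.1, h3.2]

end LimitFunction

section Estimate

noncomputable def box (α₀ : Z2) (K : ℕ) : Finset Z2 :=
  Fintype.piFinset fun j => Finset.Icc (α₀ j - K) (α₀ j + K)

lemma mem_box {α α₀ : Z2} {K : ℕ} : α ∈ box α₀ K ↔ ∀ j, |α j - α₀ j| ≤ K := by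
  simp only [box, Fintype.mem_piFinset, Finset.mem_Icc, abs_sub_le_iff]
  exact forall_congr' fun j => by constructor <;> rintro ⟨h1, h2⟩ <;> constructor <;> linarith

lemma card_box (α₀ : Z2) (K : ℕ) : (box α₀ K).card = (2 * K + 1) ^ 2 := by
  simp only [box, Fintype.card_piFinset, Int.card_Icc, Fin.prod_univ_two]
  have h (z : ℤ) : (z + K + 1 - (z - K)).toNat = 2 * K + 1 := by omega
  rw [h, h, sq]

variable (a : Fin 2 → Z2 → ℝ)

lemma exists_norm_castV_le_of_support_finite (ha : ∀ η, (Function.support (a η)).Finite) :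
    ∃ M, 0 ≤ M ∧ ∀ η γ, a η γ ≠ 0 → ‖castV γ‖ ≤ M := by
  obtain ⟨M, hM⟩ := ((Set.finite_iUnion ha).image fun γ => ‖castV γ‖).bddAbove
  exact ⟨max M 0, le_max_right _ _, fun η γ hγ =>
    (hM ⟨γ, Set.mem_iUnion.2 ⟨η, hγ⟩, rfl⟩).trans (le_max_left _ _)⟩

lemma mem_box_of_Ssub_delta_ne_zero {M : ℝ} (hM0 : 0 ≤ M)
    (hM : ∀ η γ, a η γ ≠ 0 → ‖castV γ‖ ≤ M) (l : List (Fin 2)) {β β' α : Z2}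
    (hβ' : ‖(WR l)⁻¹ *ᵥ castV β' - (WR l)⁻¹ *ᵥ castV β‖ ≤ 1)
    (hα : Ssub a l delta (β' - WprodL l *ᵥ α) ≠ 0) :
    α ∈ box (fun j => round (((WR l)⁻¹ *ᵥ castV β) j)) (⌈3 * M⌉₊ + 2) := by
  set P := (WR l)⁻¹ *ᵥ castV β
  have hsupp := norm_inv_WR_mulVec_le_of_Ssub_delta_ne_zero a hM l hα
  have hαP : ‖castV α - P‖ ≤ 3 * M + 1 := by
    have hsplit : castV α - P
        = ((WR l)⁻¹ *ᵥ castV β' - P) - (WR l)⁻¹ *ᵥ castV (β' - WprodL l *ᵥ α) := by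
      rw [castV_sub, mulVec_sub, inv_WR_mulVec_castV_mulVec]; abel
    rw [hsplit]
    refine (norm_sub_le _ _).trans ?_
    nlinarith [pow_nonneg (by norm_num : (0 : ℝ) ≤ 3 / 4) l.length]
  refine mem_box.2 fun j => ?_
  have hj : |(α j : ℝ) - P j| ≤ 3 * M + 1 := (norm_le_pi_norm (castV α - P) j).trans hαP
  have hround := abs_sub_round (P j)
  have hceil := Nat.le_ceil (3 * M)
  have hreal : |((α j - round (P j) : ℤ) : ℝ)| ≤ ((⌈3 * M⌉₊ + 2 : ℕ) : ℝ) := by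
    push_cast
    calc |(α j : ℝ) - round (P j)| ≤ |(α j : ℝ) - P j| + |P j - round (P j)| := abs_sub_le _ _ _
      _ ≤ _ := by linarith
  exact_mod_cast hreal

lemma abs_nabla_Ssub_le (ha : ∀ η, (Function.support (a η)).Finite)
    (hsum : ∀ η γ, subd (a η) (Wsel η) (fun _ => 1) γ = 1) {M : ℝ} (hM0 : 0 ≤ M)
    (hM : ∀ η γ, a η γ ≠ 0 → ‖castV γ‖ ≤ M) (l : List (Fin 2)) {e : ℝ}
    (hg : ∀ γ i, |nabla (Ssub a l delta) γ i| ≤ e) {c : Z2 → ℝ}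
    (hc : ∀ α i, |nabla c α i| ≤ 1) (β : Z2) (i : Fin 2) :
    |nabla (Ssub a l c) β i| ≤ (2 * (⌈3 * M⌉₊ + 2) + 1) ^ 2 * (2 * (⌈3 * M⌉₊ + 2) * e) := by
  set K := ⌈3 * M⌉₊ + 2
  set α₀ : Z2 := fun j => round (((WR l)⁻¹ *ᵥ castV β) j)
  have hrepr (c' : Z2 → ℝ) (β' : Z2)
      (hβ' : ‖(WR l)⁻¹ *ᵥ castV β' - (WR l)⁻¹ *ᵥ castV β‖ ≤ 1) :
      Ssub a l c' β' = ∑ α ∈ box α₀ K, Ssub a l delta (β' - WprodL l *ᵥ α) * c' α :=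
    Ssub_eq_sum a ha l c' β' _ fun α hα => mem_box_of_Ssub_delta_ne_zero a hM0 hM l hβ' hα
  have hnear : ‖(WR l)⁻¹ *ᵥ castV (β - Pi.single i 1) - (WR l)⁻¹ *ᵥ castV β‖ ≤ 1 := by
    rw [castV_sub, mulVec_sub, sub_sub_cancel_left, norm_neg]
    refine (norm_inv_WR_mulVec_le l _).trans ?_
    rw [norm_castV_single, mul_one]
    exact pow_le_one₀ (by norm_num) (by norm_num)
  have hdiff (c' : Z2 → ℝ) : nabla (Ssub a l c') β i
      = ∑ α ∈ box α₀ K, nabla (Ssub a l delta) (β - WprodL l *ᵥ α) i * c' α := by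
    rw [nabla_apply, hrepr c' _ hnear, hrepr c' β (by simp), ← Finset.sum_sub_distrib]
    refine Finset.sum_congr rfl fun α _ => ?_
    rw [nabla_apply, sub_right_comm, sub_mul]
  -- The sum rule makes the weights `∇g(β - Wα)` sum to zero, so `c` may be recentred at `α₀`.
  have hzero : ∑ α ∈ box α₀ K, nabla (Ssub a l delta) (β - WprodL l *ᵥ α) i = 0 := by
    simpa [Ssub_one a hsum, nabla_apply] using (hdiff fun _ => 1).symm
  have hcα : ∀ α ∈ box α₀ K, |c α - c α₀| ≤ 2 * K := fun α hα => by
    have hj (j : Fin 2) : |(α j : ℝ) - α₀ j| ≤ K := by exact_mod_cast mem_box.1 hα j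
    linarith [abs_sub_le_of_abs_nabla_le_one hc α α₀, hj 0, hj 1]
  calc |nabla (Ssub a l c) β i|
      = |∑ α ∈ box α₀ K, nabla (Ssub a l delta) (β - WprodL l *ᵥ α) i * (c α - c α₀)| := by
        rw [hdiff]
        simp only [mul_sub, Finset.sum_sub_distrib, ← Finset.sum_mul, hzero, zero_mul, sub_zero]
    _ ≤ ∑ α ∈ box α₀ K, e * (2 * K) := by
        refine (Finset.abs_sum_le_sum_abs _ _).trans (Finset.sum_le_sum fun α hα => ?_)
        rw [abs_mul]
        exact mul_le_mul (hg _ _) (hcα α hα) (abs_nonneg _) ((abs_nonneg _).trans (hg β i))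
    _ = _ := by
        rw [Finset.sum_const, card_box, nsmul_eq_mul]
        simp only [K]
        push_cast
        ring

end Estimate

/-- Suppose the adaptive directional subdivision scheme with masks `a₀, a₁` converges
in `C(ℝ²)`, with compactly supported limit functions `f_ε`. Then for every `ε ∈ E_∞`,
`lim_{n→∞} sup { ‖∇(S_{P_nε} c)‖_∞ : c bounded, ‖∇c‖_∞ ≤ 1 } = 0`; the iterated
subdivision operators are asymptotically contractive on differences. -/
theorem stmt15 (a : Fin 2 → Z2 → ℝ) (ha : ∀ η, (Function.support (a η)).Finite)
    (f : (ℕ → Fin 2) → (Fin 2 → ℝ) → ℝ)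
    (hf : ∀ ε : ℕ → Fin 2, f ε ≠ 0 ∧ UniformContinuous (f ε) ∧
      HasCompactSupport (f ε) ∧
      ∀ η : ℝ, 0 < η → ∃ N : ℕ, ∀ n ≥ N, ∀ α : Z2,
        |f ε ((WR (Pn ε n))⁻¹.mulVec (castV α)) - Ssub a (Pn ε n) delta α| < η) :
    ∀ ε : ℕ → Fin 2, ∀ η : ℝ, 0 < η → ∃ N : ℕ, ∀ n ≥ N,
      ∀ c : Z2 → ℝ, Bdd c → (∀ (α : Z2) (i : Fin 2), |nabla c α i| ≤ 1) →
      ∀ (α : Z2) (i : Fin 2), |nabla (Ssub a (Pn ε n) c) α i| < η := by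
  intro ε e he
  obtain ⟨M, hM0, hM⟩ := exists_norm_castV_le_of_support_finite a ha
  have hsum : ∀ η γ, subd (a η) (Wsel η) (fun _ => 1) γ = 1 := fun η γ =>
    have ⟨hf0, huc, _, hlim⟩ := hf fun _ => η
    subd_one_of_isLimitFunction (ha η) hf0 huc.continuous hlim γ
  set C : ℝ := (2 * (⌈3 * M⌉₊ + 2) + 1) ^ 2 * (2 * (⌈3 * M⌉₊ + 2))
  obtain ⟨-, huc, -, hlim⟩ := hf ε
  obtain ⟨N, hN⟩ := IsLimitFunction.exists_abs_nabla_lt hlim huc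
    (show 0 < e / (C + 1) by positivity)
  refine ⟨N, fun n hn c _ hc β i => ?_⟩
  calc |nabla (Ssub a (Pn ε n) c) β i| ≤ C * (e / (C + 1)) := by
        simpa only [C, mul_assoc] using abs_nabla_Ssub_le a ha hsum hM0 hM (Pn ε n)
          (fun γ j => (hN n hn γ j).le) hc β i
    _ < e := by
        rw [mul_div_assoc', div_lt_iff₀ (by positivity)]
        nlinarith
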